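/- The completed Eisenstein series satisfies the functional equation E*_s(z) = E*_{1−s}(z) for all z ∈ ℍ and all s where both sides are defined (by meromorphic continuation). -/

import Mathlib

open Real Set

/-- The completed Eisenstein series
`E*_s(z) = (1/2) π^{-s} Γ(s) Σ_{(m,n)≠0} (y/|mz+n|²)^s`, for `Re(s) > 1`. -/
noncomputable def Estar (s : ℂ) (x y : ℝ) : ℂ :=
  (1 / 2) * (Real.pi : ℂ) ^ (-s) * Complex.Gamma s *
    ∑' p : ℤ × ℤ, if p = 0 then 0 else
      ((y : ℂ) / ((((p.1 : ℝ) * x + (p.2 : ℝ)) ^ 2 + (p.1 : ℝ) ^ 2 * y ^ 2 : ℝ) : ℂ)) ^ s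

/-! For `z = x + iy`, `Q(m, n) = |mz + n|² / y` is a positive definite binary quadratic form.
Poisson summation in `n` rewrites its theta function `Θ(t) = Σ exp(-π Q(m, n) t)` as
`√(y/t)` times a double series that is invariant under `t ↦ 1/t` once the two summation indices
are swapped; hence `Θ(1/t) = t Θ(t)`. So `Θ` is a weak FE-pair with itself of weight `1`, whose
completed Mellin transform `Λ` is holomorphic away from `0` and `1` and satisfies
`Λ(1 - s) = Λ(s)`. For `Re s > 1`, Mellin-transforming `Θ - 1` term by term gives
`Λ(s) = Γ(s) Σ' (π Q(m, n))^(-s) = 2 E*_s(z)`. -/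

open Filter Topology Asymptotics Complex

lemma WeakFEPair.Λ_sub_eq_self {E : Type*} [NormedAddCommGroup E] [NormedSpace ℂ E]
    (P : WeakFEPair E) (hfg : P.f = P.g) (hε : P.ε = 1) (h₀ : P.f₀ = P.g₀) (s : ℂ) :
    P.Λ (P.k - s) = P.Λ s := by
  have hP : P.symm = P := by
    cases P
    simp_all [WeakFEPair.symm]
  rw [P.functional_equation s, hP, hε, one_smul]

lemma summable_exp_neg_mul_int_sq {a : ℝ} (ha : 0 < a) :
    Summable fun n : ℤ => rexp (-a * n ^ 2) := by
  convert summable_pow_mul_jacobiTheta₂_term_bound 0 (div_pos ha pi_pos) 0 using 2 with n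
  field_simp
  ring_nf

lemma summable_exp_neg_mul_sq_add_mul_sq {a b : ℝ} (ha : 0 < a) (hb : 0 < b) :
    Summable fun p : ℤ × ℤ => rexp (-(a * p.1 ^ 2 + b * p.2 ^ 2)) := by
  refine ((summable_exp_neg_mul_int_sq ha).mul_of_nonneg (summable_exp_neg_mul_int_sq hb)
    (fun _ => (exp_pos _).le) (fun _ => (exp_pos _).le)).congr fun p => ?_
  rw [← Real.exp_add]
  ring_nf

lemma tsum_exp_neg_mul_int_add_sq {u : ℝ} (hu : 0 < u) (c : ℝ) :
    ∑' n : ℤ, (rexp (-π * u * (n + c) ^ 2) : ℂ) =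
      (√u : ℂ)⁻¹ * ∑' k : ℤ, cexp (2 * π * I * c * k - π * k ^ 2 / u) := by
  have hu' : (u : ℂ) ≠ 0 := ofReal_ne_zero.mpr hu.ne'
  have hsqrt : (u : ℂ) ^ (1 / 2 : ℂ) = (√u : ℂ) := by
    rw [Real.sqrt_eq_rpow, ofReal_cpow hu.le]
    norm_num
  have hpoisson := Complex.tsum_exp_neg_quadratic (a := u) (by simpa using hu) (-(u * c))
  rw [hsqrt, one_div] at hpoisson
  calc ∑' n : ℤ, (rexp (-π * u * (n + c) ^ 2) : ℂ)
      = cexp (-π * u * c ^ 2) *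
          ∑' n : ℤ, cexp (-π * u * n ^ 2 + 2 * π * (-(u * c)) * n) := by
        rw [← tsum_mul_left]
        refine tsum_congr fun n => ?_
        rw [← Complex.exp_add, ofReal_exp]
        push_cast
        ring_nf
    _ = (√u : ℂ)⁻¹ * ∑' k : ℤ, cexp (2 * π * I * c * k - π * k ^ 2 / u) := by
        rw [hpoisson, mul_left_comm, ← tsum_mul_left]
        congr 1
        refine tsum_congr fun k => ?_
        rw [← Complex.exp_add]
        congr 1
        field_simp
        ring_nf
        rw [I_sq]
        ring

lemma Int.one_le_norm_prod_of_ne_zero {p : ℤ × ℤ} (hp : p ≠ 0) : 1 ≤ ‖p‖ := by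
  by_contra! h
  rw [Prod.norm_def, max_lt_iff, Int.norm_eq_abs, Int.norm_eq_abs] at h
  norm_cast at h
  exact hp (Prod.ext (Int.abs_lt_one_iff.1 h.1) (Int.abs_lt_one_iff.1 h.2))

lemma Int.sq_norm_prod_le_sq_add_sq (p : ℤ × ℤ) :
    ‖p‖ ^ 2 ≤ (p.1 : ℝ) ^ 2 + (p.2 : ℝ) ^ 2 := by
  rcases max_cases ‖p.1‖ ‖p.2‖ with ⟨h, _⟩ | ⟨h, _⟩ <;>
  · rw [Prod.norm_def, h, Int.norm_eq_abs, sq_abs]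
    nlinarith

lemma Int.summable_norm_prod_rpow_neg {k : ℝ} (hk : 2 < k) :
    Summable fun p : ℤ × ℤ => ‖p‖ ^ (-k) := by
  have hnorm (p : ℤ × ℤ) : ‖(finTwoArrowEquiv ℤ).symm p‖ = ‖p‖ := by
    simp [EisensteinSeries.norm_eq_max_natAbs, Prod.norm_def, Int.norm_eq_abs]
  simpa only [Function.comp_def, hnorm] using
    (finTwoArrowEquiv ℤ).symm.summable_iff.mpr
      (EisensteinSeries.summable_one_div_norm_rpow hk)

noncomputable section

namespace Estar

variable (x y : ℝ)

/-- `quadForm x y (m, n) = |m z + n|² / y` for `z = x + i y`. -/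
def quadForm (p : ℤ × ℤ) : ℝ := (((p.1 : ℝ) * x + p.2) ^ 2 + (p.1 : ℝ) ^ 2 * y ^ 2) / y

variable {y}

lemma exists_pos_mul_sq_add_sq_le_quadForm (hy : 0 < y) :
    ∃ c > 0, ∀ p : ℤ × ℤ, c * ((p.1 : ℝ) ^ 2 + (p.2 : ℝ) ^ 2) ≤ quadForm x y p := by
  -- `Q` has determinant one, so its least eigenvalue is at least `1 / trace Q`
  have hd : (0 : ℝ) < 1 + x ^ 2 + y ^ 2 := by positivity
  refine ⟨y / (1 + x ^ 2 + y ^ 2), div_pos hy hd, fun p => ?_⟩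
  rw [quadForm, div_mul_eq_mul_div, div_le_div_iff₀ hd hy]
  set m := (p.1 : ℝ)
  set n := (p.2 : ℝ)
  nlinarith [sq_nonneg ((1 + x ^ 2) * (m * x + n) + m * x * y ^ 2), sq_nonneg (m * y ^ 2),
    sq_nonneg (m * x + n), sq_nonneg m]

lemma exists_pos_mul_sq_norm_le_quadForm (hy : 0 < y) :
    ∃ c > 0, ∀ p : ℤ × ℤ, c * ‖p‖ ^ 2 ≤ quadForm x y p := by
  obtain ⟨c, hc, hQ⟩ := exists_pos_mul_sq_add_sq_le_quadForm x hy
  exact ⟨c, hc, fun p =>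
    (mul_le_mul_of_nonneg_left (Int.sq_norm_prod_le_sq_add_sq p) hc.le).trans (hQ p)⟩

lemma quadForm_pos (hy : 0 < y) {p : ℤ × ℤ} (hp : p ≠ 0) : 0 < quadForm x y p := by
  obtain ⟨c, hc, hQ⟩ := exists_pos_mul_sq_norm_le_quadForm x hy
  have hp1 := Int.one_le_norm_prod_of_ne_zero hp
  exact lt_of_lt_of_le (mul_pos hc (pow_pos (one_pos.trans_le hp1) 2)) (hQ p)

lemma quadForm_nonneg (hy : 0 < y) (p : ℤ × ℤ) : 0 ≤ quadForm x y p := by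
  unfold quadForm
  positivity

@[simp]
lemma quadForm_zero : quadForm x y 0 = 0 := by
  simp [quadForm]

variable (y) in
def theta (t : ℝ) : ℂ := ∑' p : ℤ × ℤ, (rexp (-π * quadForm x y p * t) : ℂ)

lemma summable_exp_neg_quadForm (hy : 0 < y) {t : ℝ} (ht : 0 < t) :
    Summable fun p : ℤ × ℤ => rexp (-π * quadForm x y p * t) := by
  obtain ⟨c, hc, hQ⟩ := exists_pos_mul_sq_add_sq_le_quadForm x hy
  refine (summable_exp_neg_mul_sq_add_mul_sq (a := π * t * c) (b := π * t * c)
    (by positivity) (by positivity)).of_nonneg_of_le (fun _ => (exp_pos _).le) fun p => ?_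
  gcongr
  nlinarith [hQ p, mul_pos pi_pos ht]

lemma hasSum_theta (hy : 0 < y) {t : ℝ} (ht : 0 < t) :
    HasSum (fun p : ℤ × ℤ => (rexp (-π * quadForm x y p * t) : ℂ)) (theta x y t) :=
  (summable_ofReal.mpr (summable_exp_neg_quadForm x hy ht)).hasSum

variable (y) in
/-- The terms of `theta` after Poisson summation over the second coordinate. -/
def thetaDualTerm (t : ℝ) (p : ℤ × ℤ) : ℂ :=
  cexp ((-π * y * (t * p.1 ^ 2 + t⁻¹ * p.2 ^ 2) : ℝ) + (2 * π * x * p.1 * p.2 : ℝ) * I)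

lemma norm_thetaDualTerm (t : ℝ) (p : ℤ × ℤ) :
    ‖thetaDualTerm x y t p‖ = rexp (-(π * y * t * p.1 ^ 2 + π * y * t⁻¹ * p.2 ^ 2)) := by
  rw [thetaDualTerm, norm_exp, add_re, ofReal_re, re_ofReal_mul, I_re, mul_zero, add_zero]
  ring_nf

lemma summable_thetaDualTerm (hy : 0 < y) {t : ℝ} (ht : 0 < t) :
    Summable (thetaDualTerm x y t) := by
  refine Summable.of_norm ?_
  simp_rw [norm_thetaDualTerm]
  exact summable_exp_neg_mul_sq_add_mul_sq (by positivity) (by positivity)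

lemma thetaDualTerm_one_div_swap (t : ℝ) (p : ℤ × ℤ) :
    thetaDualTerm x y (1 / t) p.swap = thetaDualTerm x y t p := by
  simp only [thetaDualTerm, Prod.fst_swap, Prod.snd_swap, one_div, inv_inv]
  congr 1
  push_cast
  ring

lemma theta_eq_sqrt_mul_tsum_thetaDualTerm (hy : 0 < y) {t : ℝ} (ht : 0 < t) :
    theta x y t = (√(y / t) : ℂ) * ∑' p, thetaDualTerm x y t p := by
  have hrow (m : ℤ) : ∑' n : ℤ, (rexp (-π * quadForm x y (m, n) * t) : ℂ) =
      (√(y / t) : ℂ) * ∑' k : ℤ, thetaDualTerm x y t (m, k) := by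
    have hsplit (n : ℤ) : -π * quadForm x y (m, n) * t =
        -π * t * y * m ^ 2 + -π * (t / y) * (n + m * x) ^ 2 := by
      rw [quadForm]
      field_simp
      ring
    have hsqrt : (√(t / y))⁻¹ = √(y / t) := by rw [← Real.sqrt_inv, inv_div]
    simp_rw [hsplit, Real.exp_add, ofReal_mul, tsum_mul_left,
      tsum_exp_neg_mul_int_add_sq (div_pos ht hy), ← ofReal_inv, hsqrt,
      mul_left_comm _ (√(y / t) : ℂ), ← tsum_mul_left, thetaDualTerm, ofReal_exp,
      ← Complex.exp_add]
    have ht' : (t : ℂ) ≠ 0 := ofReal_ne_zero.mpr ht.ne'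
    congr 2
    ext k
    congr 2
    push_cast
    field_simp
    ring
  rw [theta, (hasSum_theta x hy ht).summable.tsum_prod,
    (summable_thetaDualTerm x hy ht).tsum_prod, ← tsum_mul_left]
  exact tsum_congr hrow

lemma theta_one_div (hy : 0 < y) {t : ℝ} (ht : 0 < t) :
    theta x y (1 / t) = t * theta x y t := by
  have hsqrt : √(y / (1 / t)) = t * √(y / t) := by
    rw [show y / (1 / t) = t ^ 2 * (y / t) by field_simp, Real.sqrt_mul (sq_nonneg t),
      Real.sqrt_sq ht.le]
  rw [theta_eq_sqrt_mul_tsum_thetaDualTerm x hy (one_div_pos.mpr ht),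
    theta_eq_sqrt_mul_tsum_thetaDualTerm x hy ht, hsqrt, ← (Equiv.prodComm ℤ ℤ).tsum_eq]
  simp only [Equiv.prodComm_apply, thetaDualTerm_one_div_swap]
  push_cast
  ring

lemma continuousOn_theta (hy : 0 < y) : ContinuousOn (theta x y) (Ioi 0) := by
  intro t₀ ht₀
  have hhalf : ContinuousOn (theta x y) (Ioi (t₀ / 2)) := by
    refine continuousOn_tsum (fun p => by fun_prop)
      (summable_exp_neg_quadForm x hy (half_pos ht₀)) fun p t ht => ?_
    rw [norm_real, norm_of_nonneg (exp_pos _).le]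
    exact exp_le_exp.mpr (mul_le_mul_of_nonpos_left (mem_Ioi.mp ht).le
      (mul_nonpos_of_nonpos_of_nonneg (neg_nonpos.mpr pi_pos.le) (quadForm_nonneg x hy p)))
  exact (hhalf.continuousAt (Ioi_mem_nhds (half_lt_self ht₀))).continuousWithinAt

lemma hasSum_theta_sub_one (hy : 0 < y) {t : ℝ} (ht : 0 < t) :
    HasSum
      (fun p : ℤ × ℤ => (if p = 0 then 0 else 1) * (rexp (-π * quadForm x y p * t) : ℂ))
      (theta x y t - 1) := by
  simpa [ite_mul] using hasSum_ite_sub_hasSum (hasSum_theta x hy ht) 0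

lemma theta_sub_one_isBigO_rpow (hy : 0 < y) (r : ℝ) :
    (fun t => theta x y t - 1) =O[atTop] (· ^ r) := by
  obtain ⟨c, hc, hQ⟩ := exists_pos_mul_sq_norm_le_quadForm x hy
  have hcQ {p : ℤ × ℤ} (hp : p ≠ 0) : c ≤ quadForm x y p :=
    (le_mul_of_one_le_right hc.le (one_le_pow₀ (Int.one_le_norm_prod_of_ne_zero hp))).trans
      (hQ p)
  suffices (fun t => theta x y t - 1) =O[atTop] fun t => rexp (-(π * c) * t) from
    this.trans (isLittleO_exp_neg_mul_rpow_atTop (by positivity) r).isBigO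
  refine isBigO_iff.mpr
    ⟨rexp (π * c) * ∑' p : ℤ × ℤ, rexp (-π * quadForm x y p * 1), ?_⟩
  filter_upwards [eventually_ge_atTop 1] with t ht
  rw [norm_of_nonneg (exp_pos _).le, mul_right_comm]
  refine (hasSum_theta_sub_one x hy (by linarith)).norm_le_of_bounded
    ((summable_exp_neg_quadForm x hy one_pos).hasSum.mul_left _) fun p => ?_
  split_ifs with hp
  · simp only [zero_mul, norm_zero]
    positivity
  · rw [one_mul, norm_real, norm_of_nonneg (exp_pos _).le, ← Real.exp_add, ← Real.exp_add]
    gcongr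
    nlinarith [mul_nonneg (mul_nonneg pi_pos.le (sub_nonneg.mpr (hcQ hp))) (sub_nonneg.mpr ht)]

variable (y) in
def thetaFEPair (hy : 0 < y) : WeakFEPair ℂ where
  f := theta x y
  g := theta x y
  k := 1
  ε := 1
  f₀ := 1
  g₀ := 1
  hf_int := (continuousOn_theta x hy).locallyIntegrableOn measurableSet_Ioi
  hg_int := (continuousOn_theta x hy).locallyIntegrableOn measurableSet_Ioi
  hk := one_pos
  hε := one_ne_zero
  h_feq t ht := by
    rw [theta_one_div x hy ht]
    simp
  hf_top := theta_sub_one_isBigO_rpow x hy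
  hg_top := theta_sub_one_isBigO_rpow x hy

lemma summable_one_div_quadForm_rpow (hy : 0 < y) {σ : ℝ} (hσ : 1 < σ) :
    Summable fun p : ℤ × ℤ => 1 / quadForm x y p ^ σ := by
  obtain ⟨c, hc, hQ⟩ := exists_pos_mul_sq_norm_le_quadForm x hy
  refine ((Int.summable_norm_prod_rpow_neg (k := 2 * σ) (by linarith)).mul_left
    (c ^ (-σ))).of_nonneg_of_le (fun p => ?_) fun p => ?_
  · have := quadForm_nonneg x hy p
    positivity
  rcases eq_or_ne p 0 with rfl | hp
  · rw [quadForm_zero, Real.zero_rpow (by linarith), div_zero]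
    positivity
  · have hpos : 0 < c * ‖p‖ ^ 2 :=
      mul_pos hc (pow_pos (one_pos.trans_le (Int.one_le_norm_prod_of_ne_zero hp)) 2)
    calc 1 / quadForm x y p ^ σ = quadForm x y p ^ (-σ) := by
          rw [Real.rpow_neg (quadForm_nonneg x hy p), one_div]
      _ ≤ (c * ‖p‖ ^ 2) ^ (-σ) := Real.rpow_le_rpow_of_nonpos hpos (hQ p) (by linarith)
      _ = c ^ (-σ) * ‖p‖ ^ (-(2 * σ)) := by
          rw [Real.mul_rpow hc.le (by positivity), ← Real.rpow_natCast,
            ← Real.rpow_mul (norm_nonneg _)]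
          push_cast
          ring_nf

lemma hasSum_thetaFEPair_Λ (hy : 0 < y) {s : ℂ} (hs : 1 < s.re) :
    HasSum (fun p : ℤ × ℤ => π ^ (-s) * Gamma s * (if p = 0 then 0 else 1) /
      (quadForm x y p : ℂ) ^ s) ((thetaFEPair x y hy).Λ s) := by
  rw [← ((thetaFEPair x y hy).hasMellin (by simpa [thetaFEPair] using hs)).2]
  refine hasSum_mellin_pi_mul (fun p => ?_) (by linarith)
    (fun t ht => hasSum_theta_sub_one x hy ht)
    ((summable_one_div_quadForm_rpow x hy hs).of_nonneg_of_le (fun p => ?_) fun p => ?_)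
  · rcases eq_or_ne p 0 with rfl | hp
    · exact Or.inl (if_pos rfl)
    · exact Or.inr (quadForm_pos x hy hp)
  · have := quadForm_nonneg x hy p
    positivity
  · gcongr
    · exact Real.rpow_nonneg (quadForm_nonneg x hy p) _
    · split_ifs <;> simp

lemma div_cpow_eq_one_div_quadForm_cpow (hy : 0 < y) (p : ℤ × ℤ) (s : ℂ) :
    ((y : ℂ) / ((((p.1 : ℝ) * x + (p.2 : ℝ)) ^ 2 + (p.1 : ℝ) ^ 2 * y ^ 2 : ℝ) : ℂ)) ^ s =
      1 / (quadForm x y p : ℂ) ^ s := by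
  have harg : (quadForm x y p : ℂ).arg ≠ π := by
    rw [arg_ofReal_of_nonneg (quadForm_nonneg x hy p)]
    exact pi_ne_zero.symm
  have hinv :
      y / (((p.1 : ℝ) * x + p.2) ^ 2 + (p.1 : ℝ) ^ 2 * y ^ 2) = (quadForm x y p)⁻¹ :=
    (inv_div _ _).symm
  rw [← ofReal_div, hinv, ofReal_inv, inv_cpow _ _ harg, one_div]

lemma thetaFEPair_Λ_eq (hy : 0 < y) {s : ℂ} (hs : 1 < s.re) :
    (thetaFEPair x y hy).Λ s = 2 * Estar s x y := by
  rw [← (hasSum_thetaFEPair_Λ x hy hs).tsum_eq, Estar, ← tsum_mul_left, ← tsum_mul_left]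
  refine tsum_congr fun p => ?_
  split_ifs
  · simp
  · rw [div_cpow_eq_one_div_quadForm_cpow x hy]
    ring

end Estar

end

/-- Functional equation: the meromorphic continuation `F` of `s ↦ E*_s(z)` (analytic away
from `s = 0, 1`) satisfies `F(s) = F(1−s)` everywhere. -/
theorem Estar_functional_equation (x y : ℝ) (hy : 0 < y) :
    ∃ F : ℂ → ℂ,
      (∀ s : ℂ, 1 < s.re → F s = Estar s x y) ∧
      (∀ s : ℂ, s ≠ 0 → s ≠ 1 → AnalyticAt ℂ F s) ∧
      (∀ s : ℂ, F s = F (1 - s)) := by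
  set P := Estar.thetaFEPair x y hy
  have hk : (P.k : ℂ) = 1 := by simp [P, Estar.thetaFEPair]
  refine ⟨fun s => P.Λ s / 2, fun s hs => ?_, fun s hs₀ hs₁ => ?_, fun s => ?_⟩
  · simp only [P, Estar.thetaFEPair_Λ_eq x hy hs]
    ring
  · have hdiff : DifferentiableOn ℂ (fun s => P.Λ s / 2) {0, 1}ᶜ := fun s hs => by
      simp only [mem_compl_iff, mem_insert_iff, mem_singleton_iff, not_or] at hs
      exact ((P.differentiableAt_Λ (Or.inl hs.1) (Or.inl (by simpa [hk] using hs.2))).div_const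
        2).differentiableWithinAt
    have hopen : IsOpen ({0, 1}ᶜ : Set ℂ) := (Set.toFinite _).isClosed.isOpen_compl
    exact hdiff.analyticAt (hopen.mem_nhds (by simp [hs₀, hs₁]))
  · simp only [← hk, P.Λ_sub_eq_self rfl rfl rfl]
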